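/- arXiv:2209.02014 — 6 statements merged into one kernel-verified Lean document; each statement's English description precedes it below -/
import Mathlib

section
/- For N ≥ 3 odd, k ∈ [1, N-1], and any X ∈ E_{N-2}: γ(ι_k(X) + {k,k+1}) = γ(X) and γ(ι_k(X)) = γ(X), where + denotes symmetric difference. -/
/- Writing `γ(X) = ∑_{x ∈ X} (-1)^x` turns everything into additivity of `Finset.sum`: `ι_k` shifts by
`0` or `2`, so it keeps every sign, and `{k, k + 1}` contributes `1 - 1 = 0`; since `ι_k` never
hits `k` or `k + 1`, the symmetric difference with `{k, k + 1}` is a disjoint union. -/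

def iota (k i : ℕ) : ℕ := if i < k then i else i + 2

def gam (X : Finset ℕ) : ℤ :=
  ((X.filter (fun x => x % 2 = 0)).card : ℤ) - ((X.filter (fun x => x % 2 = 1)).card : ℤ)

theorem gam_eq_sum_neg_one_pow (X : Finset ℕ) : gam X = ∑ x ∈ X, (-1 : ℤ) ^ x := by
  rw [← Finset.sum_filter_add_sum_filter_not X (fun x => x % 2 = 0)]
  have h_even : ∀ x ∈ X.filter (fun x => x % 2 = 0), (-1 : ℤ) ^ x = 1 := fun x hx => by
    rw [neg_one_pow_eq_pow_mod_two, (Finset.mem_filter.mp hx).2, pow_zero]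
  have h_odd : ∀ x ∈ X.filter (fun x => ¬x % 2 = 0), (-1 : ℤ) ^ x = -1 := fun x hx => by
    rw [neg_one_pow_eq_pow_mod_two, Nat.mod_two_ne_zero.mp (Finset.mem_filter.mp hx).2, pow_one]
  have h_filter : X.filter (fun x => ¬x % 2 = 0) = X.filter (fun x => x % 2 = 1) :=
    Finset.filter_congr fun x _ => Nat.mod_two_ne_zero
  rw [Finset.sum_congr rfl h_even, Finset.sum_congr rfl h_odd, h_filter, gam]
  simp only [Finset.sum_const, nsmul_eq_mul, mul_one, mul_neg]
  ring

theorem gam_image_of_mod_two_eq {f : ℕ → ℕ} (hf : Function.Injective f)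
    (hf_mod : ∀ i, f i % 2 = i % 2) (X : Finset ℕ) : gam (X.image f) = gam X := by
  rw [gam_eq_sum_neg_one_pow, gam_eq_sum_neg_one_pow, Finset.sum_image hf.injOn]
  refine Finset.sum_congr rfl fun i _ => ?_
  rw [neg_one_pow_eq_pow_mod_two, hf_mod, ← neg_one_pow_eq_pow_mod_two]

theorem gam_union_of_disjoint {s t : Finset ℕ} (h : Disjoint s t) :
    gam (s ∪ t) = gam s + gam t := by
  simp only [gam_eq_sum_neg_one_pow, Finset.sum_union h]

theorem gam_pair_succ (k : ℕ) : gam {k, k + 1} = 0 := by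
  rw [gam_eq_sum_neg_one_pow, Finset.sum_pair ((Nat.lt_succ_self k).ne), pow_succ]
  ring

theorem iota_injective (k : ℕ) : Function.Injective (iota k) := by
  intro a b h
  unfold iota at h
  split_ifs at h <;> omega

theorem iota_mod_two (k i : ℕ) : iota k i % 2 = i % 2 := by
  unfold iota
  split_ifs <;> omega

theorem gam_image_iota (k : ℕ) (X : Finset ℕ) : gam (X.image (iota k)) = gam X :=
  gam_image_of_mod_two_eq (iota_injective k) (iota_mod_two k) X

theorem disjoint_image_iota_pair (k : ℕ) (X : Finset ℕ) :
    Disjoint (X.image (iota k)) {k, k + 1} := by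
  simp only [Finset.disjoint_right, Finset.mem_insert, Finset.mem_singleton, Finset.mem_image,
    not_exists, not_and]
  intro a ha x _ hx
  unfold iota at hx
  split_ifs at hx <;> omega

theorem stmt5_general (k : ℕ) (X : Finset ℕ) :
    gam (symmDiff (X.image (iota k)) ({k, k + 1} : Finset ℕ)) = gam X ∧
    gam (X.image (iota k)) = gam X := by
  have hdisj := disjoint_image_iota_pair k X
  refine ⟨?_, gam_image_iota k X⟩
  rw [hdisj.symmDiff_eq_sup, Finset.sup_eq_union, gam_union_of_disjoint hdisj, gam_pair_succ,
    add_zero, gam_image_iota]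

/-- for odd `N ≥ 3`, `k ∈ [1,N-1]`, and any even-cardinality
`X ⊆ [1,N-2]`: `γ(ι_k(X) Δ {k,k+1}) = γ(X)` and `γ(ι_k(X)) = γ(X)`,
where `Δ` is symmetric difference and `ι_k(X)` is the image of `X`. -/
theorem stmt5 (N k : ℕ) (hN : Odd N) (hN3 : 3 ≤ N) (hk1 : 1 ≤ k) (hk2 : k ≤ N - 1)
    (X : Finset ℕ) (hX : X ⊆ Finset.Icc 1 (N - 2)) (hcard : Even X.card) :
    gam (symmDiff (X.image (iota k)) ({k, k + 1} : Finset ℕ)) = gam X ∧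
    gam (X.image (iota k)) = gam X :=
  stmt5_general k X
end

section
/- For D odd, N = D+2, and t ∈ 2ℤ: the number of even-cardinality subsets X of [1,N] with N ∉ X and γ(X) = t equals C(N−1, (2t+N−1)/2), and the number of even-cardinality subsets X of [1,N] with N ∈ X and γ(X) = t equals C(N−1, (2t+N+1)/2). -/
/-- Binomial coefficient `C(n,k)` with integer lower index, defined to be `0`
for `k < 0` (and, as usual, `0` for `k > n`). -/
def chooseInt (n : ℕ) (k : ℤ) : ℕ := if 0 ≤ k then n.choose k.toNat else 0

open Finset

/-- number of odds in `[1,n]` -/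
lemma card_odd_Icc (n : ℕ) :
    ((Finset.Icc 1 n).filter (fun x => x % 2 = 1)).card = (n + 1) / 2 := by
  induction n with
  | zero => simp
  | succ n ih =>
    have hins : Finset.Icc 1 (n + 1) = insert (n + 1) (Finset.Icc 1 n) := by
      ext x; simp [Finset.mem_Icc]; omega
    rw [hins, Finset.filter_insert]
    by_cases h : (n + 1) % 2 = 1
    · rw [if_pos h, Finset.card_insert_of_notMem (by simp), ih]
      omega
    · rw [if_neg h, ih]
      omega

lemma gam_def2 (X : Finset ℕ) :
    (X.card : ℤ) = gam X + 2 * ((X.filter (fun x => x % 2 = 1)).card : ℤ) := by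
  have h1 : (X.filter (fun x => x % 2 = 0)).card
      + (X.filter (fun x => ¬ x % 2 = 0)).card = X.card :=
    Finset.card_filter_add_card_filter_not (p := fun x => x % 2 = 0)
  have h2 : X.filter (fun x => ¬ x % 2 = 0) = X.filter (fun x => x % 2 = 1) := by
    apply Finset.filter_congr; intro x _; constructor <;> omega
  rw [h2] at h1
  simp only [gam]
  omega

lemma even_card_iff_gam (X : Finset ℕ) : Even X.card ↔ Even (gam X) := by
  have h := gam_def2 X
  rw [Nat.even_iff, Int.even_iff]
  omega

lemma gam_insert_odd {a : ℕ} {Y : Finset ℕ} (ha : a % 2 = 1) (h : a ∉ Y) :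
    gam (insert a Y) = gam Y - 1 := by
  have h0 : ¬ a % 2 = 0 := by omega
  have hnm : a ∉ Y.filter (fun x => x % 2 = 1) := by simp [h]
  simp only [gam, Finset.filter_insert, if_neg h0, if_pos ha,
    Finset.card_insert_of_notMem hnm]
  push_cast
  ring

/-- The "flip the odd part" involution. -/
def flipOdd (n : ℕ) (X : Finset ℕ) : Finset ℕ :=
  X.filter (fun x => x % 2 = 0) ∪ (((Finset.Icc 1 n).filter (fun x => x % 2 = 1)) \ X)

lemma mem_flipOdd {n x : ℕ} {X : Finset ℕ} :
    x ∈ flipOdd n X ↔ (x ∈ X ∧ x % 2 = 0) ∨ ((1 ≤ x ∧ x ≤ n) ∧ x % 2 = 1 ∧ x ∉ X) := by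
  simp [flipOdd, Finset.mem_Icc]
  tauto

lemma flipOdd_subset (n : ℕ) {X : Finset ℕ} (hX : X ⊆ Finset.Icc 1 n) :
    flipOdd n X ⊆ Finset.Icc 1 n := by
  intro x hx
  rw [mem_flipOdd] at hx
  rcases hx with ⟨h1, _⟩ | ⟨h1, _⟩
  · exact hX h1
  · simpa [Finset.mem_Icc] using h1

lemma flipOdd_flipOdd (n : ℕ) {X : Finset ℕ} (hX : X ⊆ Finset.Icc 1 n) :
    flipOdd n (flipOdd n X) = X := by
  ext x
  simp only [mem_flipOdd]
  have hx : x ∈ X → (1 ≤ x ∧ x ≤ n) := fun h => Finset.mem_Icc.mp (hX h)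
  constructor
  · rintro (⟨(⟨h1, h2⟩ | ⟨h1, h2, h3⟩), h4⟩ | ⟨h1, h2, h3⟩)
    · exact h1
    · omega
    · by_contra hxX
      exact h3 (Or.inr ⟨h1, h2, hxX⟩)
  · intro hxX
    rcases Nat.mod_two_eq_zero_or_one x with h0 | h1
    · exact Or.inl ⟨Or.inl ⟨hxX, h0⟩, h0⟩
    · refine Or.inr ⟨hx hxX, h1, ?_⟩
      rintro (⟨_, h⟩ | ⟨_, _, h⟩)
      · omega
      · exact h hxX

lemma flipOdd_filter_even (n : ℕ) (X : Finset ℕ) :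
    (flipOdd n X).filter (fun x => x % 2 = 0) = X.filter (fun x => x % 2 = 0) := by
  ext x
  simp only [Finset.mem_filter, mem_flipOdd]
  constructor
  · rintro ⟨(⟨h1, h2⟩ | ⟨_, h2, _⟩), h3⟩
    · exact ⟨h1, h3⟩
    · omega
  · rintro ⟨h1, h2⟩
    exact ⟨Or.inl ⟨h1, h2⟩, h2⟩

lemma flipOdd_filter_odd (n : ℕ) (X : Finset ℕ) :
    (flipOdd n X).filter (fun x => x % 2 = 1)
      = ((Finset.Icc 1 n).filter (fun x => x % 2 = 1)) \ X := by
  ext x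
  simp only [Finset.mem_filter, mem_flipOdd, Finset.mem_sdiff, Finset.mem_Icc]
  constructor
  · rintro ⟨(⟨h1, h2⟩ | ⟨h1, h2, h3⟩), h4⟩
    · omega
    · exact ⟨⟨h1, h2⟩, h3⟩
  · rintro ⟨⟨h1, h2⟩, h3⟩
    exact ⟨Or.inr ⟨h1, h2, h3⟩, h2⟩

lemma filter_odd_subset_O {n : ℕ} {X : Finset ℕ} (hX : X ⊆ Finset.Icc 1 n) :
    X.filter (fun x => x % 2 = 1) ⊆ (Finset.Icc 1 n).filter (fun x => x % 2 = 1) :=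
  Finset.filter_subset_filter _ hX

lemma sdiff_eq_sdiff_filter {n : ℕ} {X : Finset ℕ} (hX : X ⊆ Finset.Icc 1 n) :
    ((Finset.Icc 1 n).filter (fun x => x % 2 = 1)) \ X
      = ((Finset.Icc 1 n).filter (fun x => x % 2 = 1)) \ X.filter (fun x => x % 2 = 1) := by
  ext x
  simp only [Finset.mem_sdiff, Finset.mem_filter]
  tauto

lemma card_sdiff_O {n : ℕ} {X : Finset ℕ} (hX : X ⊆ Finset.Icc 1 n) :
    ((((Finset.Icc 1 n).filter (fun x => x % 2 = 1)) \ X).card : ℤ)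
      = (((Finset.Icc 1 n).filter (fun x => x % 2 = 1)).card : ℤ)
        - ((X.filter (fun x => x % 2 = 1)).card : ℤ) := by
  rw [sdiff_eq_sdiff_filter hX, Finset.card_sdiff_of_subset (filter_odd_subset_O hX)]
  have := Finset.card_le_card (filter_odd_subset_O hX)
  omega

lemma card_flipOdd {n : ℕ} {X : Finset ℕ} (hX : X ⊆ Finset.Icc 1 n) :
    ((flipOdd n X).card : ℤ)
      = gam X + (((Finset.Icc 1 n).filter (fun x => x % 2 = 1)).card : ℤ) := by
  have hcard := gam_def2 (flipOdd n X)
  rw [flipOdd_filter_odd] at hcard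
  have hg : gam (flipOdd n X)
      = ((X.filter (fun x => x % 2 = 0)).card : ℤ)
        - ((((Finset.Icc 1 n).filter (fun x => x % 2 = 1)) \ X).card : ℤ) := by
    rw [gam, flipOdd_filter_even, flipOdd_filter_odd]
  rw [hg, card_sdiff_O hX] at hcard
  rw [hcard, gam]
  ring

lemma gam_flipOdd {n : ℕ} {X : Finset ℕ} (hX : X ⊆ Finset.Icc 1 n) :
    gam (flipOdd n X)
      = (X.card : ℤ) - (((Finset.Icc 1 n).filter (fun x => x % 2 = 1)).card : ℤ) := by
  have hg : gam (flipOdd n X)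
      = ((X.filter (fun x => x % 2 = 0)).card : ℤ)
        - ((((Finset.Icc 1 n).filter (fun x => x % 2 = 1)) \ X).card : ℤ) := by
    rw [gam, flipOdd_filter_even, flipOdd_filter_odd]
  rw [hg, card_sdiff_O hX, gam_def2 X, gam]
  ring

/-- Core counting lemma. -/
lemma core (n : ℕ) (hn : n % 2 = 0) (s : ℤ) :
    ((Finset.Icc 1 n).powerset.filter (fun X => gam X = s)).card
      = chooseInt n (s + ((n / 2 : ℕ) : ℤ)) := by
  set m : ℤ := ((n / 2 : ℕ) : ℤ) with hm
  have hOcard : (((Finset.Icc 1 n).filter (fun x => x % 2 = 1)).card : ℤ) = m := by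
    rw [card_odd_Icc]; simp only [hm]; omega
  by_cases hks : 0 ≤ s + m
  · have hchoose : chooseInt n (s + m) = n.choose (s + m).toNat := if_pos hks
    rw [hchoose]
    have hpc : ((Finset.Icc 1 n).powersetCard (s + m).toNat).card
        = n.choose (s + m).toNat := by
      rw [Finset.card_powersetCard, Nat.card_Icc]
      simp
    rw [← hpc, Finset.powersetCard_eq_filter]
    apply Finset.card_nbij' (i := flipOdd n) (j := flipOdd n)
    · intro X hXmem
      simp only [Finset.mem_coe, Finset.mem_filter, Finset.mem_powerset] at hXmem ⊢
      obtain ⟨hX, hg⟩ := hXmem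
      refine ⟨flipOdd_subset n hX, ?_⟩
      have := card_flipOdd hX
      rw [hg, hOcard] at this
      omega
    · intro X hXmem
      simp only [Finset.mem_coe, Finset.mem_filter, Finset.mem_powerset] at hXmem ⊢
      obtain ⟨hX, hcard⟩ := hXmem
      refine ⟨flipOdd_subset n hX, ?_⟩
      have := gam_flipOdd hX
      rw [hOcard, hcard] at this
      rw [this]
      omega
    · intro X hXmem
      simp only [Finset.mem_coe, Finset.mem_filter, Finset.mem_powerset] at hXmem
      exact flipOdd_flipOdd n hXmem.1
    · intro X hXmem
      simp only [Finset.mem_coe, Finset.mem_filter, Finset.mem_powerset] at hXmem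
      exact flipOdd_flipOdd n hXmem.1
  · have hchoose : chooseInt n (s + m) = 0 := if_neg hks
    rw [hchoose, Finset.card_eq_zero, Finset.filter_eq_empty_iff]
    intro X hXmem hg
    rw [Finset.mem_powerset] at hXmem
    have h1 := Finset.card_le_card (filter_odd_subset_O hXmem)
    have h2 : gam X = s := hg
    rw [gam] at h2
    omega

/-- for odd `D ≥ 1`, `N = D+2`, and even `t ∈ 2ℤ`:
`|𝓔_D^{t,+}| = C(N−1, (2t+N−1)/2)` and `|𝓔_D^{t,−}| = C(N−1, (2t+N+1)/2)`,
where `𝓔_D^{t,+}` (resp. `𝓔_D^{t,−}`) is the set of even-cardinality subsets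
`X ⊆ [1,N]` with `N ∉ X` (resp. `N ∈ X`) and `γ(X) = t`. -/
theorem stmt10 (D N : ℕ) (hD : Odd D) (h1 : 1 ≤ D) (hN : N = D + 2)
    (t : ℤ) (ht : Even t) :
    (((Finset.Icc 1 N).powerset.filter
        (fun X => Even X.card ∧ N ∉ X ∧ gam X = t)).card
      = chooseInt (N - 1) ((2 * t + N - 1) / 2)) ∧
    (((Finset.Icc 1 N).powerset.filter
        (fun X => Even X.card ∧ N ∈ X ∧ gam X = t)).card
      = chooseInt (N - 1) ((2 * t + N + 1) / 2)) := by
  have hNodd : N % 2 = 1 := by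
    obtain ⟨k, hk⟩ := hD; omega
  have hN3 : 3 ≤ N := by omega
  set n : ℕ := N - 1 with hn
  have hn2 : n % 2 = 0 := by omega
  have hNn : N = n + 1 := by omega
  have htmod : t % 2 = 0 := Int.even_iff.mp ht
  constructor
  · -- plus case
    have e1 : (Finset.Icc 1 N).powerset.filter (fun X => Even X.card ∧ N ∉ X ∧ gam X = t)
        = (Finset.Icc 1 n).powerset.filter (fun X => gam X = t) := by
      ext X
      simp only [Finset.mem_filter, Finset.mem_powerset]
      constructor
      · rintro ⟨hX, _, hNX, hg⟩
        refine ⟨fun x hx => ?_, hg⟩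
        have hx1 := Finset.mem_Icc.mp (hX hx)
        have hxN : x ≠ N := fun h => hNX (h ▸ hx)
        rw [Finset.mem_Icc]; omega
      · rintro ⟨hX, hg⟩
        have hsub : X ⊆ Finset.Icc 1 N := by
          intro x hx
          have := Finset.mem_Icc.mp (hX hx)
          rw [Finset.mem_Icc]; omega
        have hNX : N ∉ X := by
          intro h
          have := Finset.mem_Icc.mp (hX h)
          omega
        have heven : Even X.card := by
          rw [even_card_iff_gam, hg]; exact ht
        exact ⟨hsub, heven, hNX, hg⟩
    rw [e1, core n hn2 t]
    congr 1
    omega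
  · -- minus case
    have e2 : ((Finset.Icc 1 N).powerset.filter
          (fun X => Even X.card ∧ N ∈ X ∧ gam X = t)).card
        = ((Finset.Icc 1 n).powerset.filter (fun X => gam X = t + 1)).card := by
      apply Finset.card_nbij' (i := fun X => X.erase N) (j := fun Y => insert N Y)
      · intro X hXmem
        simp only [Finset.mem_coe, Finset.mem_filter, Finset.mem_powerset] at hXmem ⊢
        obtain ⟨hX, _, hNX, hg⟩ := hXmem
        constructor
        · intro x hx
          obtain ⟨hxN, hxX⟩ := Finset.mem_erase.mp hx
          have := Finset.mem_Icc.mp (hX hxX)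
          rw [Finset.mem_Icc]; omega
        · have hins : insert N (X.erase N) = X := Finset.insert_erase hNX
          have := gam_insert_odd (a := N) (Y := X.erase N) hNodd (Finset.notMem_erase N X)
          rw [hins, hg] at this
          omega
      · intro Y hYmem
        simp only [Finset.mem_coe, Finset.mem_filter, Finset.mem_powerset] at hYmem ⊢
        obtain ⟨hY, hg⟩ := hYmem
        have hNY : N ∉ Y := by
          intro h
          have := Finset.mem_Icc.mp (hY h)
          omega
        have hsub : insert N Y ⊆ Finset.Icc 1 N := by
          intro x hx
          rcases Finset.mem_insert.mp hx with h | h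
          · rw [Finset.mem_Icc]; omega
          · have := Finset.mem_Icc.mp (hY h)
            rw [Finset.mem_Icc]; omega
        have hgins : gam (insert N Y) = t := by
          rw [gam_insert_odd hNodd hNY, hg]; ring
        have heven : Even (insert N Y).card := by
          rw [Finset.card_insert_of_notMem hNY, Nat.even_iff]
          have hYodd : ¬ Even Y.card := by
            rw [even_card_iff_gam, hg, Int.even_iff]
            omega
          rw [Nat.even_iff] at hYodd
          omega
        exact ⟨hsub, heven, Finset.mem_insert_self N Y, hgins⟩
      · intro X hXmem
        simp only [Finset.mem_coe, Finset.mem_filter, Finset.mem_powerset] at hXmem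
        exact Finset.insert_erase hXmem.2.2.1
      · intro Y hYmem
        simp only [Finset.mem_coe, Finset.mem_filter, Finset.mem_powerset] at hYmem
        apply Finset.erase_insert
        intro h
        have := Finset.mem_Icc.mp (hYmem.1 h)
        omega
    rw [e2, core n hn2 (t + 1)]
    congr 1
    omega
end

section
/- For D odd and N = D+2, the involution X ↦ X + [1,D+1] of {X ∈ E_N : N ∈ X} maps {X : N ∈ X, γ(X) = t} bijectively onto {X : N ∈ X, γ(X) = −t−2} for every even integer t. -/
lemma gam_union (A B : Finset ℕ) (h : Disjoint A B) : gam (A ∪ B) = gam A + gam B := by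
  unfold gam
  rw [Finset.filter_union, Finset.filter_union,
    Finset.card_union_of_disjoint (h.mono (Finset.filter_subset _ _) (Finset.filter_subset _ _)),
    Finset.card_union_of_disjoint (h.mono (Finset.filter_subset _ _) (Finset.filter_subset _ _))]
  push_cast; ring

lemma gam_sdiff (A B : Finset ℕ) (h : B ⊆ A) : gam (A \ B) = gam A - gam B := by
  have : (A \ B) ∪ B = A := Finset.sdiff_union_of_subset h
  have h2 := gam_union (A \ B) B (Finset.sdiff_disjoint)
  rw [this] at h2; linarith

lemma gam_insert (a : ℕ) (X : Finset ℕ) (h : a ∉ X) :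
    gam (insert a X) = gam X + (if a % 2 = 0 then 1 else -1) := by
  unfold gam
  rw [Finset.filter_insert, Finset.filter_insert]
  rcases Nat.even_or_odd a with he | ho
  · have h0 : a % 2 = 0 := Nat.even_iff.mp he
    rw [if_pos h0, if_neg (by omega), if_pos h0,
      Finset.card_insert_of_notMem (fun hm => h (Finset.mem_filter.mp hm).1)]
    push_cast; ring
  · have h1 : a % 2 = 1 := Nat.odd_iff.mp ho
    rw [if_neg (by omega), if_pos h1, if_neg (by omega),
      Finset.card_insert_of_notMem (fun hm => h (Finset.mem_filter.mp hm).1)]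
    push_cast; ring

lemma gam_Icc_even (k : ℕ) : gam (Finset.Icc 1 (2 * k)) = 0 := by
  induction k with
  | zero => simp [gam]
  | succ n ih =>
      have e1 : Finset.Icc 1 (2 * (n + 1)) = insert (2*n+2) (insert (2*n+1) (Finset.Icc 1 (2*n))) := by
        ext x; simp [Finset.mem_Icc]; omega
      rw [e1, gam_insert _ _ (by simp [Finset.mem_Icc]),
        gam_insert _ _ (by simp [Finset.mem_Icc]), ih]
      norm_num [Nat.add_mul_mod_self_left]

lemma key (D N : ℕ) (hD : Odd D) (hN : N = D + 2) (t : ℤ) :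
    Set.MapsTo (fun X => symmDiff X (Finset.Icc 1 (D + 1)))
      {X : Finset ℕ | X ⊆ Finset.Icc 1 N ∧ Even X.card ∧ N ∈ X ∧ gam X = t}
      {X : Finset ℕ | X ⊆ Finset.Icc 1 N ∧ Even X.card ∧ N ∈ X ∧ gam X = -t - 2} := by
  set I := Finset.Icc 1 (D + 1) with hI
  rintro X ⟨hsub, hcard, hNX, hgam⟩
  have hNI : N ∉ I := by simp [hI, Finset.mem_Icc]; omega
  have hsd : symmDiff X I = (X \ I) ∪ (I \ X) := by
    rw [symmDiff_def]; rfl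
  have hXI : X \ I = {N} := by
    ext x
    simp only [Finset.mem_sdiff, Finset.mem_singleton, hI, Finset.mem_Icc]
    constructor
    · rintro ⟨hx, hx2⟩
      have := Finset.mem_Icc.mp (hsub hx); omega
    · rintro rfl; exact ⟨hNX, by omega⟩
  have hdisj : Disjoint (X \ I) (I \ X) := disjoint_sdiff_sdiff
  have hIiX : I \ X = I \ (I ∩ X) := by rw [Finset.sdiff_inter_self_left]
  -- gam of pieces
  have hNmod : N % 2 = 1 := by obtain ⟨k, hk⟩ := hD; omega
  have hgN : gam {N} = -1 := by
    unfold gam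
    rw [Finset.filter_singleton, Finset.filter_singleton, if_neg (by omega), if_pos hNmod]
    simp
  have hgI : gam I = 0 := by
    obtain ⟨k, hk⟩ := hD
    have : I = Finset.Icc 1 (2 * (k + 1)) := by rw [hI]; congr 1; omega
    rw [this]; exact gam_Icc_even (k + 1)
  have hXdecomp : (X ∩ I) ∪ (X \ I) = X := by
    ext x; simp only [Finset.mem_union, Finset.mem_inter, Finset.mem_sdiff]; tauto
  have hdisj2 : Disjoint (X ∩ I) (X \ I) := Finset.disjoint_sdiff_inter X I |>.symm
  have hgX : gam (X ∩ I) + gam (X \ I) = gam X := by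
    rw [← gam_union _ _ hdisj2, hXdecomp]
  have hgXI : gam (X ∩ I) = t + 1 := by rw [hXI] at hgX; rw [hgN] at hgX; linarith
  have hgIX : gam (I \ X) = -(t + 1) := by
    rw [hIiX, gam_sdiff _ _ (Finset.inter_subset_left), hgI, Finset.inter_comm, hgXI]; ring
  refine ⟨?_, ?_, ?_, ?_⟩
  · intro x hx
    replace hx : x ∈ symmDiff X I := hx
    rw [hsd] at hx
    rcases Finset.mem_union.mp hx with h | h
    · exact hsub (Finset.mem_sdiff.mp h).1
    · have := Finset.mem_Icc.mp ((Finset.mem_sdiff.mp h).1)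
      rw [Finset.mem_Icc]; omega
  · -- cardinality
    show Even (symmDiff X I).card
    have hc1 : (symmDiff X I).card = 1 + (I \ X).card := by
      rw [hsd, Finset.card_union_of_disjoint hdisj, hXI, Finset.card_singleton]
    have hc2 : (I \ X).card + (I ∩ X).card = I.card := by
      rw [hIiX]; exact Finset.card_sdiff_add_card_eq_card Finset.inter_subset_left
    have hc3 : X.card = (X ∩ I).card + 1 := by
      conv_lhs => rw [← hXdecomp]
      rw [Finset.card_union_of_disjoint hdisj2, hXI, Finset.card_singleton]
    have hc4 : I.card = D + 1 := by rw [hI, Nat.card_Icc]; omega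
    have hc5 : (I ∩ X).card = (X ∩ I).card := by rw [Finset.inter_comm]
    obtain ⟨k, hk⟩ := hD
    rw [Nat.even_iff] at hcard ⊢
    omega
  · exact Finset.mem_symmDiff.mpr (Or.inl ⟨hNX, hNI⟩)
  · show gam (symmDiff X I) = -t - 2
    rw [hsd, gam_union _ _ hdisj, hXI, hgN, hgIX]; ring

/-- for odd `D ≥ 1`, `N = D+2`, the involution `X ↦ X Δ [1,D+1]`
of `{X ∈ E_N : N ∈ X}` maps `{X : N ∈ X, γ(X) = t}` bijectively onto
`{X : N ∈ X, γ(X) = −t−2}` for every even integer `t`. -/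
theorem stmt12 (D N : ℕ) (hD : Odd D) (h1 : 1 ≤ D) (hN : N = D + 2)
    (t : ℤ) (ht : Even t) :
    Set.BijOn (fun X => symmDiff X (Finset.Icc 1 (D + 1)))
      {X : Finset ℕ | X ⊆ Finset.Icc 1 N ∧ Even X.card ∧ N ∈ X ∧ gam X = t}
      {X : Finset ℕ | X ⊆ Finset.Icc 1 N ∧ Even X.card ∧ N ∈ X ∧ gam X = -t - 2} := by
  have h2 := key D N hD hN (-t - 2)
  have he : (-(-t - 2) - 2) = t := by ring
  rw [he] at h2
  refine Set.InvOn.bijOn ⟨?_, ?_⟩ (key D N hD hN t) h2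
  · intro X _; simp [symmDiff_symmDiff_cancel_right]
  · intro X _; simp [symmDiff_symmDiff_cancel_right]
end

section
/- Let B be a finite collection of pairwise disjoint two-element subsets {i,j} of [1,N] with the nesting property: for any two distinct arcs ab, cd in B (written with the convention of ⌊·,·⌋), the sets ⌊a,b⌋ and ⌊c,d⌋ are either disjoint or nested. Let 𝒥 = [i,j] ⊆ [1,N] be an interval with |𝒥| ≡ e mod 2, e ∈ {0,1}, and suppose there exists a sequence a_1 < b_1 < a_2 < b_2 < ... < a_m < b_m in [1,N] with each a_r b_r ∈ B, each a_r < b_r with b_r − a_r odd, and 𝒥 = [a_1,b_1] ⊔ [a_2,b_2] ⊔ ... ⊔ [a_m,b_m] ⊔ 𝒥_0 where 𝒥_0 ⊆ 𝒥 and |𝒥_0| = e. Then the sequence a_1 < b_1 < ... < a_m < b_m is unique. -/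
/-!
Once the uncovered set `J₀` is known, the chain is recovered from `J \ J₀` by induction: `a 1` is
the least element of the union, `b 1` is then forced because distinct arcs of `B` have distinct
endpoints, and the rest of the chain covers what lies above `b 1`. For `e = 0` the set `J₀` is
empty. For `e = 1`, if the two data left out different points `c ≠ c'`, then `c` lies in an arc `q`
of the second chain, and an endpoint `x ≠ c` of `q` lies in an arc `p` of the first chain that
misses `c`. Since `⌊p⌋` and `⌊q⌋` are disjoint or nested and `q ⊄ p`, we get `p ⊊ q`, and an
endpoint of `q` inside `p` would be shared by the two arcs.
-/

/-- `⌊i,j⌋ ⊆ [1,N]`: the interval `[i,j]` when `i < j`, and the wrap-around set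
`[i,N] ∪ [1,j]` when `i > j`. -/
def arcSet (N i j : ℕ) : Finset ℕ :=
  if i < j then Finset.Icc i j else Finset.Icc i N ∪ Finset.Icc 1 j

/-- `(m, a, b)` is an `e`-covering datum of the interval `J` by the arcs of
`B`: the arcs `(a r, b r)` for `r ∈ [1,m]` lie in `B¹` (first entry smaller),
form a strictly interleaved chain `a 1 < b 1 < a 2 < ⋯ < a m < b m`, and `J`
is the disjoint union of the intervals `[a r, b r]` together with a set `J₀ ⊆ J`
of cardinality `e`. -/
def IsCoverDatum (B : Finset (ℕ × ℕ)) (J : Finset ℕ) (e m : ℕ) (a b : ℕ → ℕ) : Prop :=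
  (∀ r, 1 ≤ r → r ≤ m → (a r, b r) ∈ B ∧ a r < b r) ∧
  (∀ r, 1 ≤ r → r < m → b r < a (r + 1)) ∧
  ∃ J0 : Finset ℕ, J0 ⊆ J ∧ J0.card = e ∧
    (∀ r, 1 ≤ r → r ≤ m → Disjoint (Finset.Icc (a r) (b r)) J0) ∧
    J = ((Finset.Icc 1 m).biUnion fun r => Finset.Icc (a r) (b r)) ∪ J0

open Finset

namespace ArcChain

lemma arcSet_of_lt {N i j : ℕ} (h : i < j) : arcSet N i j = Icc i j := if_pos h

section Endpoints

variable {B : Finset (ℕ × ℕ)}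

lemma fst_ne_and_snd_ne
    (hBdisj : ∀ p ∈ B, ∀ q ∈ B, p ≠ q → ({p.1, p.2} : Finset ℕ) ∩ {q.1, q.2} = ∅)
    {p q : ℕ × ℕ} (hp : p ∈ B) (hq : q ∈ B) (hpq : p ≠ q) :
    p.1 ≠ q.1 ∧ p.2 ≠ q.2 := by
  have hempty := eq_empty_iff_forall_notMem.1 (hBdisj p hp q hq hpq)
  exact ⟨fun h => hempty p.1 (by simp [h]), fun h => hempty p.2 (by simp [h])⟩

lemma eq_of_fst_eq
    (hBdisj : ∀ p ∈ B, ∀ q ∈ B, p ≠ q → ({p.1, p.2} : Finset ℕ) ∩ {q.1, q.2} = ∅)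
    {p q : ℕ × ℕ} (hp : p ∈ B) (hq : q ∈ B) (h : p.1 = q.1) : p = q := by
  by_contra hpq
  exact (fst_ne_and_snd_ne hBdisj hp hq hpq).1 h

end Endpoints

lemma endpoint_notMem_Icc_of_nested {p₁ p₂ q₁ q₂ x : ℕ} (hp : p₁ ≤ p₂) (hq : q₁ ≤ q₂)
    (h₁ : p₁ ≠ q₁) (h₂ : p₂ ≠ q₂)
    (hnest : Icc p₁ p₂ ∩ Icc q₁ q₂ = ∅ ∨ Icc p₁ p₂ ⊆ Icc q₁ q₂ ∨ Icc q₁ q₂ ⊆ Icc p₁ p₂)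
    (hqp : ¬ Icc q₁ q₂ ⊆ Icc p₁ p₂) (hx : x = q₁ ∨ x = q₂) : x ∉ Icc p₁ p₂ := by
  intro hxp
  have hxq : x ∈ Icc q₁ q₂ := by rcases hx with rfl | rfl <;> simp [hq]
  rcases hnest with hdisj | hsub | hsub
  · exact eq_empty_iff_forall_notMem.1 hdisj x (mem_inter.2 ⟨hxp, hxq⟩)
  · have hl := mem_Icc.1 (hsub (left_mem_Icc.2 hp))
    have hr := mem_Icc.1 (hsub (right_mem_Icc.2 hp))
    rw [mem_Icc] at hxp
    omega
  · exact hqp hsub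

def chainUnion (m : ℕ) (a b : ℕ → ℕ) : Finset ℕ :=
  (Icc 1 m).biUnion fun r => Icc (a r) (b r)

lemma mem_chainUnion {m x : ℕ} {a b : ℕ → ℕ} :
    x ∈ chainUnion m a b ↔ ∃ r, (1 ≤ r ∧ r ≤ m) ∧ a r ≤ x ∧ x ≤ b r := by
  simp only [chainUnion, mem_biUnion, mem_Icc]

section Order

variable {m : ℕ} {a b : ℕ → ℕ}

lemma snd_lt_fst_of_lt (hab : ∀ r, 1 ≤ r → r ≤ m → a r ≤ b r)
    (hchain : ∀ r, 1 ≤ r → r < m → b r < a (r + 1)) {r s : ℕ} (hr : 1 ≤ r) (hrs : r < s)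
    (hs : s ≤ m) : b r < a s := by
  induction s, hrs using Nat.le_induction with
  | base => exact hchain r hr hs
  | succ t hrt ih =>
    have := hab t (by omega) (by omega)
    have := hchain t (by omega) hs
    have := ih (by omega)
    omega

lemma isLeast_chainUnion (hab : ∀ r, 1 ≤ r → r ≤ m → a r ≤ b r)
    (hchain : ∀ r, 1 ≤ r → r < m → b r < a (r + 1)) (hm : 1 ≤ m) :
    IsLeast (chainUnion m a b) (a 1) := by
  refine ⟨mem_chainUnion.2 ⟨1, ⟨le_rfl, hm⟩, le_rfl, hab 1 le_rfl hm⟩, fun x hx => ?_⟩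
  obtain ⟨r, ⟨hr1, hrm⟩, hx1, -⟩ := mem_chainUnion.1 hx
  rcases hr1.eq_or_lt with rfl | hr1
  · exact hx1
  · have := snd_lt_fst_of_lt hab hchain le_rfl hr1 hrm
    have := hab 1 le_rfl (by omega)
    omega

lemma chainUnion_tail {k : ℕ} (hab : ∀ r, 1 ≤ r → r ≤ k + 1 → a r ≤ b r)
    (hchain : ∀ r, 1 ≤ r → r < k + 1 → b r < a (r + 1)) :
    chainUnion k (fun r => a (r + 1)) (fun r => b (r + 1)) =
      (chainUnion (k + 1) a b).filter (b 1 < ·) := by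
  ext x
  simp only [mem_filter, mem_chainUnion]
  constructor
  · rintro ⟨r, ⟨hr1, hrk⟩, hx⟩
    have := snd_lt_fst_of_lt hab hchain le_rfl (by omega : 1 < r + 1) (by omega)
    exact ⟨⟨r + 1, ⟨by omega, by omega⟩, hx⟩, by omega⟩
  · rintro ⟨⟨r, ⟨hr1, hrk⟩, hx⟩, hbx⟩
    obtain ⟨t, rfl⟩ : ∃ t, r = t + 1 := ⟨r - 1, by omega⟩
    refine ⟨t, ⟨?_, by omega⟩, hx⟩
    by_contra ht
    obtain rfl : t = 0 := by omega
    simp only [zero_add] at hx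
    omega

end Order

def IsArcChain (B : Finset (ℕ × ℕ)) (m : ℕ) (a b : ℕ → ℕ) : Prop :=
  (∀ r, 1 ≤ r → r ≤ m → (a r, b r) ∈ B ∧ a r < b r) ∧ (∀ r, 1 ≤ r → r < m → b r < a (r + 1))

section Chains

variable {B : Finset (ℕ × ℕ)} {m : ℕ} {a b : ℕ → ℕ}

lemma IsArcChain.le (h : IsArcChain B m a b) : ∀ r, 1 ≤ r → r ≤ m → a r ≤ b r :=
  fun r hr hrm => (h.1 r hr hrm).2.le

lemma IsArcChain.tail {k : ℕ} (h : IsArcChain B (k + 1) a b) :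
    IsArcChain B k (fun r => a (r + 1)) (fun r => b (r + 1)) :=
  ⟨fun r _ hr => h.1 (r + 1) (by omega) (by omega), fun r _ hr => h.2 (r + 1) (by omega) (by omega)⟩

lemma chainUnion_nonempty (h : IsArcChain B m a b) (hm : 1 ≤ m) : (chainUnion m a b).Nonempty :=
  ⟨a 1, (isLeast_chainUnion h.le h.2 hm).1⟩

lemma chain_eq_of_chainUnion_eq
    (hBdisj : ∀ p ∈ B, ∀ q ∈ B, p ≠ q → ({p.1, p.2} : Finset ℕ) ∩ {q.1, q.2} = ∅)
    {m' : ℕ} {a' b' : ℕ → ℕ} (h : IsArcChain B m a b) (h' : IsArcChain B m' a' b')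
    (hU : chainUnion m a b = chainUnion m' a' b') :
    m = m' ∧ ∀ r, 1 ≤ r → r ≤ m → a r = a' r ∧ b r = b' r := by
  induction m generalizing m' a b a' b' with
  | zero =>
    rcases Nat.eq_zero_or_pos m' with hm' | hm'
    · exact ⟨hm'.symm, fun r hr hr0 => by omega⟩
    · have := chainUnion_nonempty h' hm'
      rw [← hU] at this
      simp [chainUnion] at this
  | succ k ih =>
    obtain ⟨k', rfl⟩ : ∃ k', m' = k' + 1 := by
      rcases Nat.eq_zero_or_pos m' with rfl | hm'
      · have := chainUnion_nonempty h (by omega)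
        rw [hU] at this
        simp [chainUnion] at this
      · exact ⟨m' - 1, by omega⟩
    have ha : a 1 = a' 1 :=
      (isLeast_chainUnion h.le h.2 (by omega)).unique
        (hU ▸ isLeast_chainUnion h'.le h'.2 (by omega))
    have hb : b 1 = b' 1 :=
      congrArg Prod.snd (eq_of_fst_eq hBdisj (h.1 1 le_rfl (by omega)).1
        (h'.1 1 le_rfl (by omega)).1 ha)
    have htail := ih h.tail h'.tail (by
      rw [chainUnion_tail h.le h.2, chainUnion_tail h'.le h'.2, hU, hb])
    refine ⟨by omega, fun r hr1 hrm => ?_⟩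
    obtain rfl | ⟨t, rfl, ht⟩ : r = 1 ∨ ∃ t, r = t + 1 ∧ 1 ≤ t := by
      rcases hr1.eq_or_lt with h | h
      · exact Or.inl h.symm
      · exact Or.inr ⟨r - 1, by omega, by omega⟩
    · exact ⟨ha, hb⟩
    · exact htail.2 t ht (by omega)

end Chains

lemma chainUnion_eq_sdiff {J J₀ : Finset ℕ} {m : ℕ} {a b : ℕ → ℕ}
    (hdisj : ∀ r, 1 ≤ r → r ≤ m → Disjoint (Icc (a r) (b r)) J₀)
    (hJ : J = chainUnion m a b ∪ J₀) : chainUnion m a b = J \ J₀ := by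
  rw [hJ, union_sdiff_right, eq_comm, Finset.sdiff_eq_self_iff_disjoint, chainUnion,
    disjoint_biUnion_left]
  exact fun r hr => hdisj r (mem_Icc.1 hr).1 (mem_Icc.1 hr).2

lemma eq_of_chainUnion_eq_sdiff_singleton {N : ℕ} {B : Finset (ℕ × ℕ)}
    (hBdisj : ∀ p ∈ B, ∀ q ∈ B, p ≠ q → ({p.1, p.2} : Finset ℕ) ∩ {q.1, q.2} = ∅)
    (hBnest : ∀ p ∈ B, ∀ q ∈ B, p ≠ q →
      arcSet N p.1 p.2 ∩ arcSet N q.1 q.2 = ∅ ∨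
      arcSet N p.1 p.2 ⊆ arcSet N q.1 q.2 ∨
      arcSet N q.1 q.2 ⊆ arcSet N p.1 p.2)
    {J : Finset ℕ} {m m' : ℕ} {a b a' b' : ℕ → ℕ} {c c' : ℕ}
    (h : IsArcChain B m a b) (h' : IsArcChain B m' a' b')
    (hU : chainUnion m a b = J \ {c}) (hU' : chainUnion m' a' b' = J \ {c'}) (hc : c ∈ J) :
    c = c' := by
  by_contra hne
  have hcU' : c ∈ chainUnion m' a' b' := hU' ▸ mem_sdiff.2 ⟨hc, by simpa using hne⟩
  obtain ⟨s, hs, hcs⟩ := mem_chainUnion.1 hcU'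
  obtain ⟨hqB, hq⟩ := h'.1 s hs.1 hs.2
  obtain ⟨x, hx, hxc⟩ : ∃ x, (x = a' s ∨ x = b' s) ∧ x ≠ c := by
    rcases eq_or_ne (a' s) c with hac | hac
    · exact ⟨b' s, Or.inr rfl, by omega⟩
    · exact ⟨a' s, Or.inl rfl, hac⟩
  have hxU' : x ∈ J \ {c'} := hU' ▸ mem_chainUnion.2 ⟨s, hs, by omega⟩
  have hxU : x ∈ chainUnion m a b := hU ▸ mem_sdiff.2 ⟨(mem_sdiff.1 hxU').1, by simpa using hxc⟩
  obtain ⟨r, hr, hxr⟩ := mem_chainUnion.1 hxU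
  obtain ⟨hpB, hp⟩ := h.1 r hr.1 hr.2
  have hcp : c ∉ Icc (a r) (b r) := fun hcp => by
    have hcU : c ∈ J \ {c} := hU ▸ mem_chainUnion.2 ⟨r, hr, mem_Icc.1 hcp⟩
    simp at hcU
  have hqp : ¬ Icc (a' s) (b' s) ⊆ Icc (a r) (b r) := fun hsub => hcp (hsub (mem_Icc.2 hcs))
  have hpq : (a r, b r) ≠ (a' s, b' s) := fun heq => by
    obtain ⟨har, hbr⟩ := Prod.mk.inj heq
    exact hqp (by rw [har, hbr])
  obtain ⟨h₁, h₂⟩ := fst_ne_and_snd_ne hBdisj hpB hqB hpq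
  have hnest := hBnest _ hpB _ hqB hpq
  rw [arcSet_of_lt hp, arcSet_of_lt hq] at hnest
  exact endpoint_notMem_Icc_of_nested hp.le hq.le h₁ h₂ hnest hqp hx (mem_Icc.2 hxr)

end ArcChain

open ArcChain

theorem stmt14_general (N : ℕ) (B : Finset (ℕ × ℕ))
    (hBdisj : ∀ p ∈ B, ∀ q ∈ B, p ≠ q →
      ({p.1, p.2} : Finset ℕ) ∩ {q.1, q.2} = ∅)
    (hBnest : ∀ p ∈ B, ∀ q ∈ B, p ≠ q →
      arcSet N p.1 p.2 ∩ arcSet N q.1 q.2 = ∅ ∨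
      arcSet N p.1 p.2 ⊆ arcSet N q.1 q.2 ∨
      arcSet N q.1 q.2 ⊆ arcSet N p.1 p.2)
    (i j : ℕ)
    (e : ℕ) (he : e = (Finset.Icc i j).card % 2)
    (m m' : ℕ) (a b a' b' : ℕ → ℕ)
    (h1 : IsCoverDatum B (Finset.Icc i j) e m a b)
    (h2 : IsCoverDatum B (Finset.Icc i j) e m' a' b') :
    m = m' ∧ ∀ r, 1 ≤ r → r ≤ m → a r = a' r ∧ b r = b' r := by
  obtain ⟨hB, hchain, J₀, hJ₀, hcard, hdisj, hJ⟩ := h1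
  obtain ⟨hB', hchain', J₀', -, hcard', hdisj', hJ'⟩ := h2
  have hU := chainUnion_eq_sdiff hdisj hJ
  have hU' := chainUnion_eq_sdiff hdisj' hJ'
  have hJ₀_eq : J₀ = J₀' := by
    rcases Nat.mod_two_eq_zero_or_one (Icc i j).card with hpar | hpar <;>
      rw [hpar] at he <;> subst he
    · rw [card_eq_zero.1 hcard, card_eq_zero.1 hcard']
    · obtain ⟨c, rfl⟩ := card_eq_one.1 hcard
      obtain ⟨c', rfl⟩ := card_eq_one.1 hcard'
      rw [eq_of_chainUnion_eq_sdiff_singleton hBdisj hBnest ⟨hB, hchain⟩ ⟨hB', hchain'⟩ hU hU'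
        (hJ₀ (mem_singleton_self c))]
  exact chain_eq_of_chainUnion_eq hBdisj ⟨hB, hchain⟩ ⟨hB', hchain'⟩ (by rw [hU, hU', hJ₀_eq])

/-- let `B` be a finite collection of arcs `(i,j)` in `[1,N]`
(pairwise disjoint two-element subsets, each of the first kind `i<j`, `j−i` odd,
or of the second kind `i>j`, `i ≡ j mod 2`) whose associated sets `⌊i,j⌋` are
pairwise disjoint or nested. If an interval `J = [i,j] ⊆ [1,N]` with
`|J| ≡ e (mod 2)`, `e ∈ {0,1}`, admits an `e`-covering datum by `B`, then the
chain `a 1 < b 1 < ⋯ < a m < b m` is unique: any two such data agree. -/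
theorem stmt14 (N : ℕ) (hN : Odd N) (B : Finset (ℕ × ℕ))
    (hBmem : ∀ p ∈ B, 1 ≤ p.1 ∧ p.1 ≤ N ∧ 1 ≤ p.2 ∧ p.2 ≤ N ∧
      ((p.1 < p.2 ∧ (p.2 - p.1) % 2 = 1) ∨ (p.2 < p.1 ∧ p.1 % 2 = p.2 % 2)))
    (hBdisj : ∀ p ∈ B, ∀ q ∈ B, p ≠ q →
      ({p.1, p.2} : Finset ℕ) ∩ {q.1, q.2} = ∅)
    (hBnest : ∀ p ∈ B, ∀ q ∈ B, p ≠ q →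
      arcSet N p.1 p.2 ∩ arcSet N q.1 q.2 = ∅ ∨
      arcSet N p.1 p.2 ⊆ arcSet N q.1 q.2 ∨
      arcSet N q.1 q.2 ⊆ arcSet N p.1 p.2)
    (i j : ℕ) (hi : 1 ≤ i) (hij : i ≤ j) (hjN : j ≤ N)
    (e : ℕ) (he : e = (Finset.Icc i j).card % 2)
    (m m' : ℕ) (a b a' b' : ℕ → ℕ)
    (h1 : IsCoverDatum B (Finset.Icc i j) e m a b)
    (h2 : IsCoverDatum B (Finset.Icc i j) e m' a' b') :
    m = m' ∧ ∀ r, 1 ≤ r → r ≤ m → a r = a' r ∧ b r = b' r :=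
  stmt14_general N B hBdisj hBnest i j e he m m' a b a' b' h1 h2
end

section
/- Let 𝒳_D (D ≥ 2 even, N = D+1) be defined inductively: 𝒳_0 = {∅}; for D ≥ 2, B ∈ 𝒳_D iff B ∈ Pr_D or B = I_k(B') for some k ∈ [1,D] and B' ∈ 𝒳_{D−2}, where I_k(B') = {ι_k(i)ι_k(j) : ij ∈ B'} ∪ {{k,k+1}}. Then for every B ∈ 𝒳_D and any two distinct elements ab, cd of B, the sets ⌊a,b⌋ and ⌊c,d⌋ satisfy: ⌊a,b⌋ ∩ ⌊c,d⌋ = ∅, or ⌊a,b⌋ ⊆ ⌊c,d⌋, or ⌊c,d⌋ ⊆ ⌊a,b⌋. -/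
/-- `I_k(B') = {(ι_k i, ι_k j) : (i,j) ∈ B'} ∪ {(k,k+1)}`. -/
def Ik (k : ℕ) (B : Finset (ℕ × ℕ)) : Finset (ℕ × ℕ) :=
  B.image (fun p => (iota k p.1, iota k p.2)) ∪ {(k, k + 1)}

/-- The family `Pr_D` for even `D`: the empty set, `Q_D^t = {(D+1,1),…,(D+2−t,t)}`
for even `t ∈ [2,D/2]`, and `Q_D^{−t} = {(D+1,1),…,(D+3−t,t−1)}` for even
`t ∈ [2,(D+2)/2]`. -/
def PrD (D : ℕ) (B : Finset (ℕ × ℕ)) : Prop :=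
  B = ∅ ∨
  (∃ t, Even t ∧ 2 ≤ t ∧ t ≤ D / 2 ∧
    B = (Finset.Icc 1 t).image (fun a => (D + 2 - a, a))) ∨
  (∃ t, Even t ∧ 2 ≤ t ∧ t ≤ (D + 2) / 2 ∧
    B = (Finset.Icc 1 (t - 1)).image (fun a => (D + 2 - a, a)))

/-- The inductively defined family `𝒳_D` for even `D`: `𝒳_0 = {∅}`, and for
`D ≥ 2`, `B ∈ 𝒳_D` iff `B ∈ Pr_D` or `B = I_k(B')` for some `k ∈ [1,D]` and
`B' ∈ 𝒳_{D−2}`. -/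
inductive XD : ℕ → Finset (ℕ × ℕ) → Prop
  | base : XD 0 ∅
  | pr {D : ℕ} {B : Finset (ℕ × ℕ)} (hD : Even D) (h2 : 2 ≤ D) (h : PrD D B) : XD D B
  | ind {D : ℕ} {B' : Finset (ℕ × ℕ)} (k : ℕ) (hk1 : 1 ≤ k) (hk2 : k ≤ D + 2)
      (h : XD D B') : XD (D + 2) (Ik k B')

-- auxiliary part to insert
def good (N i j : ℕ) : Prop :=
  1 ≤ i ∧ 1 ≤ j ∧ ((i < j ∧ j ≤ N ∧ ¬(i = 1 ∧ j = N)) ∨ (j + 2 ≤ i ∧ i ≤ N))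

def cov (k i j : ℕ) : Prop := if i < j then i < k ∧ k ≤ j else (k ≤ j ∨ i < k)

def E1 (N k : ℕ) : ℕ := if 2 ≤ k ∧ k ≤ N then k - 1 else N
def E2 (N k : ℕ) : ℕ := if 2 ≤ k ∧ k ≤ N then k else 1

lemma mem_arcSet {N i j x : ℕ} :
    x ∈ arcSet N i j ↔
      (if i < j then i ≤ x ∧ x ≤ j else ((i ≤ x ∧ x ≤ N) ∨ (1 ≤ x ∧ x ≤ j))) := by
  unfold arcSet; split_ifs <;> simp [Finset.mem_Icc, Finset.mem_union]

lemma mem_image_iota {k x : ℕ} {A : Finset ℕ} :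
    x ∈ A.image (iota k) ↔ ((x < k ∧ x ∈ A) ∨ (k + 2 ≤ x ∧ x - 2 ∈ A)) := by
  simp only [Finset.mem_image, iota]
  constructor
  · rintro ⟨y, hy, h⟩
    by_cases hyk : y < k
    · rw [if_pos hyk] at h; subst h; exact Or.inl ⟨hyk, hy⟩
    · rw [if_neg hyk] at h
      right
      refine ⟨by omega, ?_⟩
      have : x - 2 = y := by omega
      rwa [this]
  · rintro (⟨h1, h2⟩ | ⟨h1, h2⟩)
    · exact ⟨x, h2, by rw [if_pos h1]⟩
    · exact ⟨x - 2, h2, by rw [if_neg (by omega)]; omega⟩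

lemma arc_image {N k i j : ℕ} (hg : good N i j) (hk1 : 1 ≤ k) (hk2 : k ≤ N + 1) (x : ℕ) :
    x ∈ arcSet (N + 2) (iota k i) (iota k j) ↔
      (x ∈ (arcSet N i j).image (iota k) ∨ ((x = k ∨ x = k + 1) ∧ cov k i j)) := by
  obtain ⟨hi, hj, hg⟩ := hg
  rw [mem_image_iota]
  simp only [mem_arcSet]
  unfold iota cov
  split_ifs <;> omega

lemma cov_iff {N k i j : ℕ} (hg : good N i j) (hk1 : 1 ≤ k) (hk2 : k ≤ N + 1) :
    cov k i j ↔ (E1 N k ∈ arcSet N i j ∧ E2 N k ∈ arcSet N i j) := by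
  obtain ⟨hi, hj, hg⟩ := hg
  simp only [mem_arcSet]
  unfold cov E1 E2
  split_ifs <;> omega

lemma good_iota {N k i j : ℕ} (hg : good N i j) (hk1 : 1 ≤ k) (hk2 : k ≤ N + 1) :
    good (N + 2) (iota k i) (iota k j) := by
  obtain ⟨hi, hj, hg⟩ := hg
  unfold good iota
  split_ifs <;> omega

lemma good_kk1 {N k : ℕ} (hN : 1 ≤ N) (hk1 : 1 ≤ k) (hk2 : k ≤ N + 1) :
    good (N + 2) k (k + 1) := by
  unfold good; omega

lemma iota_inj {k x y : ℕ} (h : iota k x = iota k y) : x = y := by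
  unfold iota at h; split_ifs at h <;> omega

lemma arcSet_mono_iota {N k i1 j1 i2 j2 : ℕ} (ha : good N i1 j1) (hb : good N i2 j2)
    (hk1 : 1 ≤ k) (hk2 : k ≤ N + 1)
    (hsub : arcSet N i1 j1 ⊆ arcSet N i2 j2) :
    arcSet (N + 2) (iota k i1) (iota k j1) ⊆ arcSet (N + 2) (iota k i2) (iota k j2) := by
  intro x hx
  rw [arc_image ha hk1 hk2] at hx
  rw [arc_image hb hk1 hk2]
  rcases hx with hx | ⟨hx, hcov⟩
  · left
    rw [mem_image_iota] at hx ⊢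
    rcases hx with ⟨h1, h2⟩ | ⟨h1, h2⟩
    · exact Or.inl ⟨h1, hsub h2⟩
    · exact Or.inr ⟨h1, hsub h2⟩
  · right
    refine ⟨hx, ?_⟩
    rw [cov_iff ha hk1 hk2] at hcov
    rw [cov_iff hb hk1 hk2]
    exact ⟨hsub hcov.1, hsub hcov.2⟩

lemma arcSet_disj_iota {N k i1 j1 i2 j2 : ℕ} (ha : good N i1 j1) (hb : good N i2 j2)
    (hk1 : 1 ≤ k) (hk2 : k ≤ N + 1)
    (hd : arcSet N i1 j1 ∩ arcSet N i2 j2 = ∅) :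
    arcSet (N + 2) (iota k i1) (iota k j1) ∩ arcSet (N + 2) (iota k i2) (iota k j2) = ∅ := by
  rw [Finset.eq_empty_iff_forall_notMem] at hd ⊢
  intro x hx
  rw [Finset.mem_inter, arc_image ha hk1 hk2, arc_image hb hk1 hk2] at hx
  obtain ⟨h1, h2⟩ := hx
  rcases h1 with h1 | ⟨he, hc⟩ <;> rcases h2 with h2 | ⟨he', hc'⟩
  · rw [mem_image_iota] at h1 h2
    rcases h1 with ⟨u1, v1⟩ | ⟨u1, v1⟩ <;> rcases h2 with ⟨u2, v2⟩ | ⟨u2, v2⟩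
    · exact hd x (Finset.mem_inter.mpr ⟨v1, v2⟩)
    · omega
    · omega
    · exact hd (x - 2) (Finset.mem_inter.mpr ⟨v1, v2⟩)
  · rw [mem_image_iota] at h1; omega
  · rw [mem_image_iota] at h2; omega
  · rw [cov_iff ha hk1 hk2] at hc
    rw [cov_iff hb hk1 hk2] at hc'
    exact hd (E1 N k) (Finset.mem_inter.mpr ⟨hc.1, hc'.1⟩)

lemma kk1_cases {N k i j : ℕ} (hb : good N i j) (hk1 : 1 ≤ k) (hk2 : k ≤ N + 1) :
    arcSet (N + 2) k (k + 1) ⊆ arcSet (N + 2) (iota k i) (iota k j) ∨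
    arcSet (N + 2) k (k + 1) ∩ arcSet (N + 2) (iota k i) (iota k j) = ∅ := by
  have hm : ∀ x, x ∈ arcSet (N + 2) k (k + 1) ↔ (x = k ∨ x = k + 1) := by
    intro x; rw [mem_arcSet]; split_ifs <;> omega
  by_cases hc : cov k i j
  · left; intro x hx
    rw [arc_image hb hk1 hk2]
    exact Or.inr ⟨(hm x).mp hx, hc⟩
  · right
    rw [Finset.eq_empty_iff_forall_notMem]
    intro x hx
    rw [Finset.mem_inter, arc_image hb hk1 hk2] at hx
    obtain ⟨h1, h2⟩ := hx
    rw [hm] at h1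
    rcases h2 with h2 | ⟨_, h2⟩
    · rw [mem_image_iota] at h2; omega
    · exact hc h2

lemma pr_good_nest (D s : ℕ) (hs : 2 * s ≤ D) :
    (∀ p ∈ (Finset.Icc 1 s).image (fun a => (D + 2 - a, a)), good (D + 1) p.1 p.2) ∧
    (∀ p ∈ (Finset.Icc 1 s).image (fun a => (D + 2 - a, a)),
      ∀ q ∈ (Finset.Icc 1 s).image (fun a => (D + 2 - a, a)), p ≠ q →
        arcSet (D + 1) p.1 p.2 ∩ arcSet (D + 1) q.1 q.2 = ∅ ∨
        arcSet (D + 1) p.1 p.2 ⊆ arcSet (D + 1) q.1 q.2 ∨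
        arcSet (D + 1) q.1 q.2 ⊆ arcSet (D + 1) p.1 p.2) := by
  have hsub : ∀ a b : ℕ, 1 ≤ a → a ≤ b → b ≤ s →
      arcSet (D + 1) (D + 2 - a) a ⊆ arcSet (D + 1) (D + 2 - b) b := by
    intro a b h1 h2 h3 x hx
    rw [mem_arcSet] at hx ⊢
    split_ifs at hx ⊢ <;> omega
  constructor
  · rintro p hp
    simp only [Finset.mem_image, Finset.mem_Icc] at hp
    obtain ⟨a, ⟨ha1, ha2⟩, rfl⟩ := hp
    show good (D + 1) (D + 2 - a) a
    unfold good; omega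
  · rintro p hp q hq hne
    simp only [Finset.mem_image, Finset.mem_Icc] at hp hq
    obtain ⟨a, ⟨ha1, ha2⟩, rfl⟩ := hp
    obtain ⟨b, ⟨hb1, hb2⟩, rfl⟩ := hq
    rcases lt_trichotomy a b with h | h | h
    · exact Or.inr (Or.inl (hsub a b ha1 (le_of_lt h) hb2))
    · exact absurd (by rw [h]) hne
    · exact Or.inr (Or.inr (hsub b a hb1 (le_of_lt h) ha2))

theorem xd_main (D : ℕ) (B : Finset (ℕ × ℕ)) (h : XD D B) :
    (∀ p ∈ B, good (D + 1) p.1 p.2) ∧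
    (∀ p ∈ B, ∀ q ∈ B, p ≠ q →
      arcSet (D + 1) p.1 p.2 ∩ arcSet (D + 1) q.1 q.2 = ∅ ∨
      arcSet (D + 1) p.1 p.2 ⊆ arcSet (D + 1) q.1 q.2 ∨
      arcSet (D + 1) q.1 q.2 ⊆ arcSet (D + 1) p.1 p.2) := by
  induction h with
  | base => simp
  | @pr D B hD h2 hpr =>
    rcases hpr with rfl | ⟨t, hte, ht2, htle, rfl⟩ | ⟨t, hte, ht2, htle, rfl⟩
    · simp
    · obtain ⟨m, hm⟩ := hD
      exact pr_good_nest D t (by omega)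
    · obtain ⟨m, hm⟩ := hD
      exact pr_good_nest D (t - 1) (by omega)
  | @ind D B' k hk1 hk2 h ih =>
    obtain ⟨ihg, ihn⟩ := ih
    have hk2' : k ≤ (D + 1) + 1 := by omega
    have key : ∀ p ∈ Ik k B', (∃ q ∈ B', (iota k q.1, iota k q.2) = p) ∨ p = (k, k + 1) := by
      intro p hp
      rw [Or.comm]
      simpa [Ik, Finset.mem_union, Finset.mem_image, Finset.mem_singleton] using hp
    constructor
    · intro p hp
      rcases key p hp with ⟨q, hq, rfl⟩ | rfl
      · exact good_iota (ihg q hq) hk1 hk2'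
      · exact good_kk1 (by omega) hk1 hk2'
    · intro p hp q hq hne
      rcases key p hp with ⟨a, ha, rfl⟩ | rfl <;> rcases key q hq with ⟨b, hb, rfl⟩ | rfl
      · have hga := ihg a ha
        have hgb := ihg b hb
        by_cases hab : a = b
        · subst hab; exact absurd rfl hne
        · rcases ihn a ha b hb hab with hd | hs | hs
          · exact Or.inl (arcSet_disj_iota hga hgb hk1 hk2' hd)
          · exact Or.inr (Or.inl (arcSet_mono_iota hga hgb hk1 hk2' hs))
          · exact Or.inr (Or.inr (arcSet_mono_iota hgb hga hk1 hk2' hs))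
      · rcases kk1_cases (ihg a ha) hk1 hk2' with hs | hd
        · exact Or.inr (Or.inr hs)
        · left
          rw [Finset.inter_comm] at hd
          exact hd
      · rcases kk1_cases (ihg b hb) hk1 hk2' with hs | hd
        · exact Or.inr (Or.inl hs)
        · exact Or.inl hd
      · exact absurd rfl hne

/-- for even `D`, `N = D+1`, and any `B ∈ 𝒳_D`, the sets `⌊a,b⌋`
associated to distinct arcs of `B` are pairwise disjoint or nested. -/
theorem stmt15 (D N : ℕ) (hD : Even D) (hN : N = D + 1)
    (B : Finset (ℕ × ℕ)) (hB : XD D B) :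
    ∀ p ∈ B, ∀ q ∈ B, p ≠ q →
      arcSet N p.1 p.2 ∩ arcSet N q.1 q.2 = ∅ ∨
      arcSet N p.1 p.2 ⊆ arcSet N q.1 q.2 ∨
      arcSet N q.1 q.2 ⊆ arcSet N p.1 p.2 := by
  subst hN
  exact (xd_main D B hB).2
end

section
/- Let D be even, N = D+1, and let B ∈ 𝒳_D with B ≠ ∅ and B ⊆ {arcs {i,j} with i>j, i≡j mod 2} (i.e., B = B^0), satisfying properties (P1) and (P3). Then B = {{D+1,1},{D,2},...,{D+2−s,s}} for some s ≥ 1, i.e., B ∈ Pr_D. -/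
/-!
Every arc of `B = B⁰` points downwards, so `B¹ = ∅` and the only 0-covered set is `∅`. Then (P3)
forces the intervals `[1, i₁ - 1]`, `[i_{2s} + 1, N]` and the gaps between consecutive `i_r`
(except the middle one) to be empty: the `i_r` run through `1, …, s` and `N - s + 1, …, N`.
-/

open Finset

/-- `J` is 0-covered by `B`: `J` is a disjoint union of intervals `[a,b]` over
arcs `(a,b) ∈ B¹` (arcs with first entry smaller) forming an interleaved chain. -/
def Covered0 (B : Finset (ℕ × ℕ)) (J : Finset ℕ) : Prop :=
  ∃ (m : ℕ) (a b : ℕ → ℕ),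
    (∀ r, 1 ≤ r → r ≤ m → (a r, b r) ∈ B ∧ a r < b r) ∧
    (∀ r, 1 ≤ r → r < m → b r < a (r + 1)) ∧
    J = (Finset.Icc 1 m).biUnion fun r => Finset.Icc (a r) (b r)

namespace Covered0

variable {B : Finset (ℕ × ℕ)}

theorem eq_empty {J : Finset ℕ} (hB : ∀ p ∈ B, p.2 ≤ p.1) (h : Covered0 B J) : J = ∅ := by
  obtain ⟨m, a, b, harc, -, rfl⟩ := h
  obtain rfl : m = 0 := by
    by_contra hm
    obtain ⟨hab, hlt⟩ := harc 1 le_rfl (Nat.one_le_iff_ne_zero.2 hm)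
    exact (hB _ hab).not_gt hlt
  simp

theorem Icc_lt {x y : ℕ} (hB : ∀ p ∈ B, p.2 ≤ p.1) (h : Covered0 B (Icc x y)) : y < x :=
  not_le.1 <| Finset.Icc_eq_empty_iff.1 (h.eq_empty hB)

end Covered0

theorem eq_add_sub_of_forall_succ_eq {i : ℕ → ℕ} {a b : ℕ}
    (h : ∀ r, a ≤ r → r < b → i (r + 1) = i r + 1) :
    ∀ r, a ≤ r → r ≤ b → i r = i a + (r - a) := by
  intro r har
  induction r, har using Nat.le_induction with
  | base => simp
  | succ n han ih =>
    intro hnb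
    rw [h n han hnb, ih (Nat.le_of_succ_le hnb)]
    omega

theorem stmt17_general (D N : ℕ) (hN : N = D + 1)
    (B : Finset (ℕ × ℕ))
    (hmem : ∀ p ∈ B, 1 ≤ p.2 ∧ p.2 < p.1 ∧ p.1 ≤ N ∧ p.1 % 2 = p.2 % 2)
    -- (P1):
    (s : ℕ) (i : ℕ → ℕ)
    (hmono : ∀ r, 1 ≤ r → r < 2 * s → i r < i (r + 1))
    (hrange : ∀ r, 1 ≤ r → r ≤ 2 * s → 1 ≤ i r ∧ i r ≤ N)
    (hB : B = (Finset.Icc 1 s).image (fun r => (i (2 * s + 1 - r), i r)))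
    -- (P3):
    (hP3mid : ∀ r, ((1 ≤ r ∧ r ≤ s - 1) ∨ (s + 1 ≤ r ∧ r ≤ 2 * s - 1)) →
      Covered0 B (Finset.Icc (i r + 1) (i (r + 1) - 1)))
    (hP3lo : Covered0 B (Finset.Icc 1 (i 1 - 1)))
    (hP3hi : Covered0 B (Finset.Icc (i (2 * s) + 1) N)) :
    B = (Finset.Icc 1 s).image (fun a => (D + 2 - a, a)) := by
  have hdown : ∀ p ∈ B, p.2 ≤ p.1 := fun p hp => (hmem p hp).2.1.le
  have hstep : ∀ r, ((1 ≤ r ∧ r ≤ s - 1) ∨ (s + 1 ≤ r ∧ r ≤ 2 * s - 1)) →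
      i (r + 1) = i r + 1 := fun r hr => by
    have := (hP3mid r hr).Icc_lt hdown
    have := hmono r (by omega) (by omega)
    omega
  have hlow := eq_add_sub_of_forall_succ_eq (a := 1) (b := s) fun r h₁ h₂ =>
    hstep r (.inl ⟨h₁, by omega⟩)
  have hhigh := eq_add_sub_of_forall_succ_eq (a := s + 1) (b := 2 * s) fun r h₁ h₂ =>
    hstep r (.inr ⟨h₁, by omega⟩)
  rw [hB]
  refine Finset.image_congr fun r hr => ?_
  obtain ⟨hr₁, hrs⟩ : 1 ≤ r ∧ r ≤ s := by simpa using hr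
  have hfirst := hP3lo.Icc_lt hdown
  have hlast := hP3hi.Icc_lt hdown
  have hfirst_pos := (hrange 1 le_rfl (by omega)).1
  have hlast_le := (hrange (2 * s) (by omega) le_rfl).2
  have hir := hlow r hr₁ hrs
  have hir' := hhigh (2 * s + 1 - r) (by omega) (by omega)
  have hlast_eq := hhigh (2 * s) (by omega) le_rfl
  simp only [Prod.mk.injEq]
  omega

/-- let `D` be even `≥ 2`, `N = D+1`, and let `B` be a nonempty
collection of pairwise disjoint two-element subsets of `[1,N]`, all of the
second kind (`i > j`, `i ≡ j mod 2`), i.e. `B = B⁰`, satisfying (P1) (witnessed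
by the strictly increasing sequence `i_1 < ⋯ < i_{2s}` with
`B = {(i_{2s},i_1),…,(i_{s+1},i_s)}`) and (P3). Then
`B = {(D+1,1),(D,2),…,(D+2−s,s)}`, i.e. `B ∈ Pr_D`. -/
theorem stmt17 (D N : ℕ) (hD : Even D) (h2 : 2 ≤ D) (hN : N = D + 1)
    (B : Finset (ℕ × ℕ)) (hne : B.Nonempty)
    (hmem : ∀ p ∈ B, 1 ≤ p.2 ∧ p.2 < p.1 ∧ p.1 ≤ N ∧ p.1 % 2 = p.2 % 2)
    (hdisj : ∀ p ∈ B, ∀ q ∈ B, p ≠ q →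
      ({p.1, p.2} : Finset ℕ) ∩ {q.1, q.2} = ∅)
    -- (P1):
    (s : ℕ) (hs : 1 ≤ s) (i : ℕ → ℕ)
    (hmono : ∀ r, 1 ≤ r → r < 2 * s → i r < i (r + 1))
    (hrange : ∀ r, 1 ≤ r → r ≤ 2 * s → 1 ≤ i r ∧ i r ≤ N)
    (hB : B = (Finset.Icc 1 s).image (fun r => (i (2 * s + 1 - r), i r)))
    -- (P3):
    (hP3arc : ∀ p ∈ B, p.1 < p.2 → Covered0 B (Finset.Icc (p.1 + 1) (p.2 - 1)))
    (hP3mid : ∀ r, ((1 ≤ r ∧ r ≤ s - 1) ∨ (s + 1 ≤ r ∧ r ≤ 2 * s - 1)) →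
      Covered0 B (Finset.Icc (i r + 1) (i (r + 1) - 1)))
    (hP3lo : Covered0 B (Finset.Icc 1 (i 1 - 1)))
    (hP3hi : Covered0 B (Finset.Icc (i (2 * s) + 1) N)) :
    B = (Finset.Icc 1 s).image (fun a => (D + 2 - a, a)) :=
  stmt17_general D N hN B hmem s i hmono hrange hB hP3mid hP3lo hP3hi
end
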